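/- arXiv:1003.3959 — 6 statements merged into one kernel-verified Lean document; each statement's English description precedes it below -/
import Mathlib

section
/- Let G be a group and let S₁, S₂ be generating subsets of G such that S₁^m ⊆ S₂^n ⊆ S₁^{m'} for some positive integers m, m', n (where S^k denotes the set of products of k elements of S). Then G is boundedly presented by S₁ if and only if G is boundedly presented by S₂. -/
open scoped Pointwise

/-- A group `G` is *boundedly presented* by a subset `S ⊆ G` if there are an integer `n` and a
set `R` of words of length at most `n` in the letters `S ∪ S⁻¹`, each representing the identity
in `G`, such that the canonical homomorphism from the quotient of the free group on `S` by the
normal closure of `R` onto `G` is an isomorphism. -/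
def BoundedlyPresentedBy (G : Type*) [Group G] (S : Set G) : Prop :=
  ∃ (n : ℕ) (R : Set (FreeGroup S)),
    (∀ r ∈ R, ∃ w : List (S × Bool), FreeGroup.mk w = r ∧ w.length ≤ n) ∧
    Function.Surjective (FreeGroup.lift (fun s : S => (s : G))) ∧
    MonoidHom.ker (FreeGroup.lift (fun s : S => (s : G))) = Subgroup.normalClosure R

namespace BPAux
variable {G : Type*} [Group G]

def ev (S : Set G) : FreeGroup S →* G := FreeGroup.lift (fun s : S => (s : G))

theorem ev_of (S : Set G) (s : S) : ev S (FreeGroup.of s) = (s : G) := FreeGroup.lift_apply_of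

theorem mk_cons {S : Type*} (p : S × Bool) (L : List (S × Bool)) :
    FreeGroup.mk (p :: L) = FreeGroup.mk [p] * FreeGroup.mk L := by
  rw [FreeGroup.mul_mk]; rfl

theorem mk_single_true {S : Type*} (s : S) : FreeGroup.mk [(s, true)] = FreeGroup.of s := rfl

theorem mk_single_false {S : Type*} (s : S) :
    FreeGroup.mk [(s, false)] = (FreeGroup.of s)⁻¹ := by
  rw [← mk_single_true, FreeGroup.inv_mk]; rfl

theorem lift_mk_exists {α β : Type*} (f : α → FreeGroup β) (W : α → List (β × Bool)) (a : ℕ)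
    (hW : ∀ x, FreeGroup.mk (W x) = f x) (ha : ∀ x, (W x).length ≤ a) :
    ∀ L : List (α × Bool), ∃ V : List (β × Bool),
      FreeGroup.mk V = FreeGroup.lift f (FreeGroup.mk L) ∧ V.length ≤ L.length * a := by
  intro L
  induction L with
  | nil => exact ⟨[], by rw [← FreeGroup.one_eq_mk, ← FreeGroup.one_eq_mk, map_one], by simp⟩
  | cons p L ih =>
    obtain ⟨V, hV, hVl⟩ := ih
    obtain ⟨x, e⟩ := p
    have hblock : ∃ U : List (β × Bool),
        FreeGroup.mk U = FreeGroup.lift f (FreeGroup.mk [(x, e)]) ∧ U.length ≤ a := by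
      cases e
      · refine ⟨FreeGroup.invRev (W x), ?_, by rw [FreeGroup.invRev_length]; exact ha x⟩
        rw [mk_single_false, map_inv, FreeGroup.lift_apply_of, ← hW x, FreeGroup.inv_mk]
      · refine ⟨W x, ?_, ha x⟩
        rw [mk_single_true, FreeGroup.lift_apply_of, hW x]
    obtain ⟨U, hU, hUl⟩ := hblock
    refine ⟨U ++ V, ?_, ?_⟩
    · rw [← FreeGroup.mul_mk, hU, hV, ← map_mul, ← mk_cons]
    · simp only [List.length_append, List.length_cons]
      calc U.length + V.length ≤ a + L.length * a := Nat.add_le_add hUl hVl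
        _ = (L.length + 1) * a := by ring

theorem key (S T : Set G) (hTsur : Function.Surjective (ev T)) (a b : ℕ)
    (hS : ∀ s : S, ∃ w : List (T × Bool), w.length ≤ a ∧ ev T (FreeGroup.mk w) = (s : G))
    (hT : ∀ t : T, ∃ w : List (S × Bool), w.length ≤ b ∧ ev S (FreeGroup.mk w) = (t : G))
    (h : BoundedlyPresentedBy G S) : BoundedlyPresentedBy G T := by
  classical
  obtain ⟨N, R, hR, _, hker₀⟩ := h
  have hker : MonoidHom.ker (ev S) = Subgroup.normalClosure R := hker₀
  choose WS hWSl hWS using hS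
  choose WT hWTl hWT using hT
  let ψ : FreeGroup S →* FreeGroup T := FreeGroup.lift (fun s => FreeGroup.mk (WS s))
  let φ : FreeGroup T →* FreeGroup S := FreeGroup.lift (fun t => FreeGroup.mk (WT t))
  have hφof : ∀ t : T, φ (FreeGroup.of t) = FreeGroup.mk (WT t) := fun t => FreeGroup.lift_apply_of
  have hψof : ∀ s : S, ψ (FreeGroup.of s) = FreeGroup.mk (WS s) := fun s => FreeGroup.lift_apply_of
  have hπφ : ∀ x, ev S (φ x) = ev T x := by
    have : (ev S).comp φ = ev T := FreeGroup.ext_hom _ _ (by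
      intro t
      rw [MonoidHom.comp_apply, hφof, hWT, ev_of])
    intro x; exact DFunLike.congr_fun this x
  have hπψ : ∀ x, ev T (ψ x) = ev S x := by
    have : (ev T).comp ψ = ev S := FreeGroup.ext_hom _ _ (by
      intro s
      rw [MonoidHom.comp_apply, hψof, hWS, ev_of])
    intro x; exact DFunLike.congr_fun this x
  refine ⟨max (N * a) (1 + b * a),
    (ψ '' R) ∪ Set.range (fun t : T => FreeGroup.of t * (ψ (φ (FreeGroup.of t)))⁻¹), ?_, hTsur, ?_⟩
  · rintro r' (⟨r, hr, rfl⟩ | ⟨t, rfl⟩)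
    · obtain ⟨w, hw, hwl⟩ := hR r hr
      obtain ⟨V, hV, hVl⟩ := lift_mk_exists (fun s => FreeGroup.mk (WS s)) WS a
        (fun _ => rfl) hWSl w
      refine ⟨V, by rw [hV, hw], ?_⟩
      exact le_trans (le_trans hVl (Nat.mul_le_mul_right a hwl)) (le_max_left _ _)
    · obtain ⟨V, hV, hVl⟩ := lift_mk_exists (fun s => FreeGroup.mk (WS s)) WS a
        (fun _ => rfl) hWSl (WT t)
      refine ⟨(t, true) :: FreeGroup.invRev V, ?_, ?_⟩
      · show FreeGroup.mk ((t, true) :: FreeGroup.invRev V)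
          = FreeGroup.of t * (ψ (φ (FreeGroup.of t)))⁻¹
        rw [mk_cons, mk_single_true, ← FreeGroup.inv_mk, hV, hφof]
      · simp only [List.length_cons, FreeGroup.invRev_length]
        have : V.length ≤ b * a := le_trans hVl (Nat.mul_le_mul_right a (hWTl t))
        exact le_trans (by omega) (le_max_right (N * a) (1 + b * a))
  · show MonoidHom.ker (ev T) = Subgroup.normalClosure
      ((ψ '' R) ∪ Set.range (fun t : T => FreeGroup.of t * (ψ (φ (FreeGroup.of t)))⁻¹))
    have hRker : ∀ r ∈ R, ev S r = 1 := by
      intro r hr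
      have : r ∈ MonoidHom.ker (ev S) := by
        rw [hker]; exact Subgroup.subset_normalClosure hr
      exact this
    apply le_antisymm
    · -- ker ≤ normalClosure R'
      intro x hx
      have hx' : ev T x = 1 := hx
      set C := Subgroup.normalClosure
        ((ψ '' R) ∪ Set.range (fun t : T => FreeGroup.of t * (ψ (φ (FreeGroup.of t)))⁻¹)) with hC
      have hcorr : ∀ t : T, FreeGroup.of t * (ψ (φ (FreeGroup.of t)))⁻¹ ∈ C :=
        fun t => Subgroup.subset_normalClosure (Or.inr ⟨t, rfl⟩)
      have hq : ∀ y : FreeGroup T,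
          QuotientGroup.mk' C y = QuotientGroup.mk' C (ψ (φ y)) := by
        have heq : (QuotientGroup.mk' C) = (QuotientGroup.mk' C).comp (ψ.comp φ) := by
          apply FreeGroup.ext_hom
          intro t
          simp only [MonoidHom.comp_apply, QuotientGroup.mk'_apply]
          rw [QuotientGroup.eq]
          have h1 : FreeGroup.of t * (ψ (φ (FreeGroup.of t)))⁻¹ ∈ C := hcorr t
          have h2 : (FreeGroup.of t * (ψ (φ (FreeGroup.of t)))⁻¹)⁻¹ ∈ C := C.inv_mem h1
          have h3 : (FreeGroup.of t)⁻¹ * (FreeGroup.of t * (ψ (φ (FreeGroup.of t)))⁻¹)⁻¹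
              * ((FreeGroup.of t)⁻¹)⁻¹ ∈ C :=
            Subgroup.normalClosure_normal.conj_mem _ h2 (FreeGroup.of t)⁻¹
          have h4 : (FreeGroup.of t)⁻¹ * (ψ (φ (FreeGroup.of t)))
              = (FreeGroup.of t)⁻¹ * (FreeGroup.of t * (ψ (φ (FreeGroup.of t)))⁻¹)⁻¹
              * ((FreeGroup.of t)⁻¹)⁻¹ := by
            group
          rw [h4]; exact h3
        intro y; exact DFunLike.congr_fun heq y
      have h1 : φ x ∈ Subgroup.normalClosure R := by
        rw [← hker]
        exact MonoidHom.mem_ker.2 (by rw [hπφ]; exact hx')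
      have h2 : ψ (φ x) ∈ C := by
        have hle : Subgroup.normalClosure R ≤ C.comap ψ := by
          haveI : (C.comap ψ).Normal := Subgroup.Normal.comap Subgroup.normalClosure_normal ψ
          apply Subgroup.normalClosure_le_normal
          intro r hr
          exact Subgroup.subset_normalClosure (Or.inl ⟨r, hr, rfl⟩)
        exact hle h1
      have h3 : QuotientGroup.mk' C x = 1 := by
        rw [hq x]
        simp only [QuotientGroup.mk'_apply]
        exact (QuotientGroup.eq_one_iff _).2 h2
      have h5 : x ∈ MonoidHom.ker (QuotientGroup.mk' C) := MonoidHom.mem_ker.2 h3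
      rwa [QuotientGroup.ker_mk'] at h5
    · apply Subgroup.normalClosure_le_normal
      rintro x (⟨r, hr, rfl⟩ | ⟨t, rfl⟩)
      · exact MonoidHom.mem_ker.2 (by rw [hπψ]; exact hRker r hr)
      · refine MonoidHom.mem_ker.2 ?_
        show ev T (FreeGroup.of t * (ψ (φ (FreeGroup.of t)))⁻¹) = 1
        rw [map_mul, map_inv, hπψ, hπφ]
        simp


theorem ev_surjective (S : Set G) (h : Subgroup.closure S = ⊤) :
    Function.Surjective (ev S) := by
  rw [← MonoidHom.range_eq_top, ev, FreeGroup.range_lift_eq_closure, Subtype.range_coe, h]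

theorem exists_word_of_mem_pow (S : Set G) : ∀ {k : ℕ} {g : G}, g ∈ S ^ k →
    ∃ w : List (S × Bool), w.length = k ∧ ev S (FreeGroup.mk w) = g := by
  intro k
  induction k with
  | zero =>
    intro g hg
    rw [pow_zero, Set.mem_one] at hg
    exact ⟨[], rfl, by rw [← FreeGroup.one_eq_mk, map_one, hg]⟩
  | succ k ih =>
    intro g hg
    rw [pow_succ, Set.mem_mul] at hg
    obtain ⟨x, hx, y, hy, rfl⟩ := hg
    obtain ⟨w, hwl, hwe⟩ := ih hx
    refine ⟨w ++ [(⟨y, hy⟩, true)], by simp [hwl], ?_⟩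
    rw [← FreeGroup.mul_mk, map_mul, hwe, mk_single_true, ev_of]

/-- Mutual bounded expressibility from the sandwich hypotheses. -/
theorem expr (S₁ S₂ : Set G) {t : G} (ht : t ∈ S₁) (m k : ℕ) (hm : 0 < m)
    (h₁ : S₁ ^ m ⊆ S₂ ^ k) (wt : List (S₂ × Bool)) (hwt : ev S₂ (FreeGroup.mk wt) = t) :
    ∀ s : S₁, ∃ w : List (S₂ × Bool),
      w.length ≤ k + k + wt.length ∧ ev S₂ (FreeGroup.mk w) = (s : G) := by
  intro s
  obtain ⟨j, rfl⟩ : ∃ j, m = j + 1 := ⟨m - 1, (Nat.succ_pred_eq_of_pos hm).symm⟩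
  have hA : (s : G) * t ^ j ∈ S₂ ^ k := by
    apply h₁
    rw [pow_succ']
    exact Set.mul_mem_mul s.2 (Set.pow_mem_pow ht)
  have hB : t ^ (j + 1) ∈ S₂ ^ k := h₁ (Set.pow_mem_pow ht)
  obtain ⟨A, hAl, hAe⟩ := exists_word_of_mem_pow S₂ hA
  obtain ⟨B, hBl, hBe⟩ := exists_word_of_mem_pow S₂ hB
  refine ⟨A ++ FreeGroup.invRev B ++ wt, ?_, ?_⟩
  · simp only [List.length_append, FreeGroup.invRev_length, hAl, hBl]
    omega
  · rw [← FreeGroup.mul_mk, ← FreeGroup.mul_mk, ← FreeGroup.inv_mk, map_mul, map_mul, map_inv,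
      hAe, hBe, hwt]
    group

end BPAux

/-- if `S₁ ^ m ⊆ S₂ ^ n ⊆ S₁ ^ m'` for some positive integers `m, m', n`, then `G`
is boundedly presented by `S₁` if and only if it is boundedly presented by `S₂`. -/
theorem boundedlyPresentedBy_congr_of_pow_subset_pow {G : Type*} [Group G] (S₁ S₂ : Set G)
    (hgen₁ : Subgroup.closure S₁ = ⊤) (hgen₂ : Subgroup.closure S₂ = ⊤)
    (m m' n : ℕ) (hm : 0 < m) (hm' : 0 < m') (hn : 0 < n)
    (h₁ : S₁ ^ m ⊆ S₂ ^ n) (h₂ : S₂ ^ n ⊆ S₁ ^ m') :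
    BoundedlyPresentedBy G S₁ ↔ BoundedlyPresentedBy G S₂ := by
  classical
  rcases Set.eq_empty_or_nonempty S₁ with rfl | ⟨t, ht⟩
  · have hS₂ : S₂ = ∅ := by
      by_contra h
      obtain ⟨g, hg⟩ := (Set.nonempty_iff_ne_empty.2 h).pow (n := n)
      have hmem := h₂ hg
      rw [Set.empty_pow hm'.ne'] at hmem
      exact hmem
    rw [hS₂]
  rcases Set.eq_empty_or_nonempty S₂ with rfl | ⟨v, hv⟩
  · exfalso
    obtain ⟨g, hg⟩ := (Set.Nonempty.pow ⟨t, ht⟩ (n := m))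
    have hmem := h₁ hg
    rw [Set.empty_pow hn.ne'] at hmem
    exact hmem
  have hsur₁ : Function.Surjective (BPAux.ev S₁) := BPAux.ev_surjective _ hgen₁
  have hsur₂ : Function.Surjective (BPAux.ev S₂) := BPAux.ev_surjective _ hgen₂
  obtain ⟨xt, hxt⟩ := hsur₂ t
  obtain ⟨xv, hxv⟩ := hsur₁ v
  have hxt' : BPAux.ev S₂ (FreeGroup.mk xt.toWord) = t := by rw [FreeGroup.mk_toWord]; exact hxt
  have hxv' : BPAux.ev S₁ (FreeGroup.mk xv.toWord) = v := by rw [FreeGroup.mk_toWord]; exact hxv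
  have E12 := BPAux.expr S₁ S₂ ht m n hm h₁ xt.toWord hxt'
  have E21 := BPAux.expr S₂ S₁ hv n m' hn h₂ xv.toWord hxv'
  constructor
  · exact BPAux.key S₁ S₂ hsur₂ _ _ E12 E21
  · exact BPAux.key S₂ S₁ hsur₁ _ _ E21 E12
end

section
/- Let G be a group that is boundedly presented by a symmetric generating subset S (i.e. S = S⁻¹). Let N be a normal subgroup of G, and suppose that for some positive integer n, N is generated as a normal subgroup of G by N ∩ S^n. Then the quotient group G/N is boundedly presented by the image of S under the canonical projection G → G/N. -/
open scoped Pointwise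

/-!
Write `π : F(S) → G` for the presentation map. Every element of `N ∩ Sⁿ` is the image of a
positive word of length `n` in `F(S)`, which lies in the kernel of `F(S) → G → G/N`. Since `π` is
surjective, this kernel is the preimage of `N`, hence is normally generated by `ker π` together
with these words, all of length at most `max m n` if the relators of `G` have length at most `m`.
Finally, the presentation map of `G/N` factors through the surjection `F(S) → F(S̄)` induced by
the projection of `S` onto its image `S̄`; it maps the kernel onto the kernel and does not increase word length.
-/

open Function Subgroup

namespace FreeGroup

variable {α β H : Type*} [Group H]

def wordBall (α : Type*) (n : ℕ) : Set (FreeGroup α) :=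
  {x | ∃ w : List (α × Bool), mk w = x ∧ w.length ≤ n}

theorem wordBall_mono : Monotone (wordBall α) :=
  fun _ _ hmn _ ⟨w, hw, hlen⟩ => ⟨w, hw, hlen.trans hmn⟩

theorem map_mem_wordBall (f : α → β) {n : ℕ} {x : FreeGroup α} (hx : x ∈ wordBall α n) :
    map f x ∈ wordBall β n := by
  obtain ⟨w, rfl, hlen⟩ := hx
  exact ⟨w.map fun y => (f y.1, y.2), map.mk.symm, by simpa using hlen⟩

theorem pow_subset_image_wordBall (S : Set H) (n : ℕ) :
    S ^ n ⊆ lift (fun s : S => (s : H)) '' wordBall S n := by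
  intro g hg
  obtain ⟨c, rfl⟩ := Set.mem_pow.mp hg
  exact ⟨mk (List.ofFn fun i => (c i, true)), ⟨_, rfl, by simp⟩,
    by simp [lift_mk, List.map_ofFn, Function.comp_def]⟩

theorem comp_lift {K : Type*} [Group K] (φ : H →* K) (f : α → H) :
    φ.comp (lift f) = lift (φ ∘ f) :=
  ext_hom _ _ fun _ => by simp

theorem lift_comp_map (f : α → β) (g : β → H) : (lift g).comp (map f) = lift (g ∘ f) :=
  ext_hom _ _ fun _ => by simp

end FreeGroup

open FreeGroup

def HasBoundedRelators {α H : Type*} [Group H] (φ : FreeGroup α →* H) : Prop :=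
  ∃ n, φ.ker = normalClosure (φ.ker ∩ wordBall α n)

namespace HasBoundedRelators

variable {α β H : Type*} [Group H]

theorem of_ker_le {φ : FreeGroup α →* H} (n : ℕ)
    (h : φ.ker ≤ normalClosure (φ.ker ∩ wordBall α n)) : HasBoundedRelators φ :=
  ⟨n, le_antisymm h (normalClosure_le_normal Set.inter_subset_left)⟩

theorem comp_mk' {φ : FreeGroup α →* H} (hφ : Surjective φ) (hrel : HasBoundedRelators φ)
    (N : Subgroup H) [N.Normal] (n : ℕ) (hN : N ≤ normalClosure (φ '' wordBall α n ∩ N)) :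
    HasBoundedRelators ((QuotientGroup.mk' N).comp φ) := by
  obtain ⟨m, hm⟩ := hrel
  set ψ := (QuotientGroup.mk' N).comp φ
  set K := normalClosure (ψ.ker ∩ wordBall α (max m n))
  have hker : ψ.ker = N.comap φ := by
    rw [← MonoidHom.comap_ker, QuotientGroup.ker_mk']
  have hφK : φ.ker ≤ K := by
    rw [hm]
    refine normalClosure_mono (Set.inter_subset_inter ?_ (wordBall_mono (le_max_left m n)))
    exact fun x hx => by simp [ψ, MonoidHom.mem_ker.mp hx]
  have hNK : N ≤ K.map φ := by
    have : (K.map φ).Normal := Normal.map inferInstance φ hφ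
    refine hN.trans (normalClosure_le_normal ?_)
    rintro _ ⟨⟨x, hx, rfl⟩, hxN⟩
    refine ⟨x, subset_normalClosure ⟨?_, wordBall_mono (le_max_right m n) hx⟩, rfl⟩
    rwa [hker]
  refine of_ker_le (max m n) ?_
  calc ψ.ker = N.comap φ := hker
    _ ≤ (K.map φ).comap φ := comap_mono hNK
    _ = K := by rw [comap_map_eq, sup_eq_left.mpr hφK]

theorem of_comp_map {f : α → β} (hf : Surjective f) {g : β → H}
    (hrel : HasBoundedRelators (lift (g ∘ f))) : HasBoundedRelators (lift g) := by
  obtain ⟨n, hn⟩ := hrel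
  have hker : (lift g).ker = (lift (g ∘ f)).ker.map (map f) := by
    rw [← lift_comp_map, ← MonoidHom.comap_ker, map_comap_eq,
      MonoidHom.range_eq_top_of_surjective _ (map_surjective hf), top_inf_eq]
  refine of_ker_le n ?_
  calc (lift g).ker = (lift (g ∘ f)).ker.map (map f) := hker
    _ = (normalClosure ((lift (g ∘ f)).ker ∩ wordBall α n)).map (map f) := congrArg _ hn
    _ = normalClosure (map f '' ((lift (g ∘ f)).ker ∩ wordBall α n)) :=
      map_normalClosure _ _ (map_surjective hf)
    _ ≤ _ := normalClosure_mono ?_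
  rintro _ ⟨x, ⟨hxker, hx⟩, rfl⟩
  refine ⟨?_, map_mem_wordBall f hx⟩
  rw [SetLike.mem_coe, MonoidHom.mem_ker, ← MonoidHom.comp_apply, lift_comp_map]
  exact hxker

end HasBoundedRelators

theorem boundedlyPresentedBy_iff {G : Type*} [Group G] (S : Set G) :
    BoundedlyPresentedBy G S ↔ Surjective (lift (fun s : S => (s : G))) ∧
      HasBoundedRelators (lift (fun s : S => (s : G))) := by
  constructor
  · rintro ⟨n, R, hR, hsurj, hker⟩
    refine ⟨hsurj, HasBoundedRelators.of_ker_le n ?_⟩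
    exact hker.le.trans
      (normalClosure_mono fun r hr => ⟨hker.ge (subset_normalClosure hr), hR r hr⟩)
  · rintro ⟨hsurj, n, hker⟩
    exact ⟨n, _, fun r hr => hr.2, hsurj, hker⟩

theorem quotient_boundedlyPresentedBy_image_general {G : Type*} [Group G] (S : Set G)
    (hS : BoundedlyPresentedBy G S)
    (N : Subgroup G) [N.Normal] (n : ℕ)
    (hN : Subgroup.normalClosure ((N : Set G) ∩ S ^ n) = N) :
    BoundedlyPresentedBy (G ⧸ N) ((QuotientGroup.mk : G → G ⧸ N) '' S) := by
  obtain ⟨hsurj, hrel⟩ := (boundedlyPresentedBy_iff S).1 hS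
  let f : S → (QuotientGroup.mk : G → G ⧸ N) '' S := fun s => ⟨s, s, s.2, rfl⟩
  have hf : Surjective f := by
    rintro ⟨_, s, hs, rfl⟩
    exact ⟨⟨s, hs⟩, rfl⟩
  have hfactor : lift (Subtype.val ∘ f) = (QuotientGroup.mk' N).comp (lift (↑)) := by
    rw [comp_lift]; rfl
  have hNwords : N ≤ normalClosure (lift (fun s : S => (s : G)) '' wordBall S n ∩ N) := by
    refine hN.ge.trans (normalClosure_mono ?_)
    rintro g ⟨hgN, hgS⟩
    exact ⟨pow_subset_image_wordBall S n hgS, hgN⟩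
  refine (boundedlyPresentedBy_iff _).2 ⟨?_, ?_⟩
  · refine Surjective.of_comp (g := map f) ?_
    rw [← MonoidHom.coe_comp, lift_comp_map, hfactor]
    exact (QuotientGroup.mk'_surjective N).comp hsurj
  · refine HasBoundedRelators.of_comp_map hf ?_
    rw [hfactor]
    exact hrel.comp_mk' hsurj N n hNwords

/-- if `G` is boundedly presented by a symmetric generating subset `S` and the
normal subgroup `N` is generated, as a normal subgroup, by `N ∩ S ^ n` for some positive `n`,
then `G / N` is boundedly presented by the image of `S`. -/
theorem quotient_boundedlyPresentedBy_image {G : Type*} [Group G] (S : Set G)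
    (hsymm : S⁻¹ = S) (hgen : Subgroup.closure S = ⊤) (hS : BoundedlyPresentedBy G S)
    (N : Subgroup G) [N.Normal] (n : ℕ) (hn : 0 < n)
    (hN : Subgroup.normalClosure ((N : Set G) ∩ S ^ n) = N) :
    BoundedlyPresentedBy (G ⧸ N) ((QuotientGroup.mk : G → G ⧸ N) '' S) :=
  quotient_boundedlyPresentedBy_image_general S hS N n hN
end

section
/- Let G be a group, N a normal subgroup of G, and p : G → G/N the canonical projection. Suppose that G/N is boundedly presented by a subset T ⊆ G/N, and let T' ⊆ G be a subset with p(T') = T. Then G is boundedly presented by the subset N ∪ T'. -/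
open scoped Pointwise

/-!
Take as relators all relations of length at most `n + 4` among the generators `N ∪ T'`, and let
`P` be the group they present. The letters from `N` span a homomorphic image of `N` in `P`
(relations of length 3), which is normal since conjugating such a letter by any generator gives a
relation of length 4. Lifting the relators of `G ⧸ N` along a section `T → T'` makes the quotient
of `P` by this image a quotient of `G ⧸ N`, so an element of `P` trivial in `G` lies in the image
of `N`, on which `P → G` is injective.
-/

namespace FreeGroup

variable {α β : Type*} [DecidableEq α] [DecidableEq β]

theorem norm_le_iff_exists_word {x : FreeGroup α} {n : ℕ} :
    x.norm ≤ n ↔ ∃ w : List (α × Bool), mk w = x ∧ w.length ≤ n :=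
  ⟨fun h => ⟨x.toWord, mk_toWord, h⟩, fun ⟨_, hw, hn⟩ => hw ▸ norm_mk_le.trans hn⟩

theorem norm_map_le (f : α → β) (x : FreeGroup α) : (map f x).norm ≤ x.norm := by
  conv_lhs => rw [← mk_toWord (x := x), map.mk]
  exact norm_mk_le.trans (List.length_map _).le

end FreeGroup

open FreeGroup Subgroup

section

variable {G : Type*} [Group G]

theorem closure_union_eq_top_of_closure_image_eq_top {N : Subgroup G} [N.Normal] {T' : Set G}
    (h : closure ((↑) '' T' : Set (G ⧸ N)) = ⊤) : closure ((N : Set G) ∪ T') = ⊤ := by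
  have hmap : (closure T').map (QuotientGroup.mk' N) = ⊤ := by
    rwa [MonoidHom.map_closure]
  rw [Subgroup.closure_union, closure_eq, sup_comm, ← QuotientGroup.ker_mk' N, ← comap_map_eq,
    hmap, comap_top]

variable [DecidableEq G]

def shortRelations (S : Set G) (n : ℕ) : Set (FreeGroup S) :=
  {x | lift ((↑) : S → G) x = 1 ∧ x.norm ≤ n}

theorem boundedlyPresentedBy_iff_s3 {S : Set G} :
    BoundedlyPresentedBy G S ↔
      closure S = ⊤ ∧
        ∃ n, (lift ((↑) : S → G)).ker ≤ normalClosure (shortRelations S n) := by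
  rw [BoundedlyPresentedBy, lift_surjective_iff_closure_range_eq_top, Subtype.range_coe]
  constructor
  · rintro ⟨n, R, hR, hS, hker⟩
    refine ⟨hS, n, hker.trans_le (normalClosure_mono fun r hr => ⟨?_, ?_⟩)⟩
    · exact hker.ge (subset_normalClosure hr)
    · exact norm_le_iff_exists_word.mpr (hR r hr)
  · rintro ⟨hS, n, hker⟩
    exact ⟨n, shortRelations S n, fun r hr => norm_le_iff_exists_word.mp hr.2, hS,
      hker.antisymm (normalClosure_le_normal fun r hr => hr.1)⟩

def toGroupOfShortRelations (S : Set G) (k : ℕ) : PresentedGroup (shortRelations S k) →* G :=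
  PresentedGroup.toGroup fun _ h => h.1

@[simp]
theorem toGroupOfShortRelations_of {S : Set G} {k : ℕ} (s : S) :
    toGroupOfShortRelations S k (PresentedGroup.of s) = s :=
  PresentedGroup.toGroup.of _

@[simp]
theorem toGroupOfShortRelations_mk {S : Set G} {k : ℕ} (x : FreeGroup S) :
    toGroupOfShortRelations S k (PresentedGroup.mk _ x) = lift (↑) x :=
  rfl

theorem mk_eq_mk_of_lift_eq_of_norm_add_le {S : Set G} {k : ℕ} {x y : FreeGroup S}
    (h : lift ((↑) : S → G) x = lift (↑) y) (hk : x.norm + y.norm ≤ k) :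
    PresentedGroup.mk (shortRelations S k) x = PresentedGroup.mk _ y := by
  refine PresentedGroup.mk_eq_mk_of_mul_inv_mem ⟨by simp [h], ?_⟩
  exact (FreeGroup.norm_mul_le _ _).trans (by rwa [norm_inv_eq])

section NormalSubgroup

variable (N : Subgroup G) (T' : Set G) {k : ℕ}

def ofNormalSubgroup (hk : 4 ≤ k) :
    N →* PresentedGroup (shortRelations ((N : Set G) ∪ T') k) :=
  MonoidHom.mk' (fun m => PresentedGroup.of ⟨m, Or.inl m.2⟩) fun m m' => by
    refine mk_eq_mk_of_lift_eq_of_norm_add_le (by simp) ?_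
    grw [FreeGroup.norm_mul_le]
    simp
    omega

variable {N T'}

@[simp]
theorem toGroupOfShortRelations_ofNormalSubgroup (hk : 4 ≤ k) (m : N) :
    toGroupOfShortRelations _ k (ofNormalSubgroup N T' hk m) = m :=
  PresentedGroup.toGroup.of _

theorem mk_mem_range_ofNormalSubgroup (hk : 4 ≤ k) {x : FreeGroup ↥((N : Set G) ∪ T')}
    (hxN : lift (↑) x ∈ N) (hx : x.norm + 1 ≤ k) :
    PresentedGroup.mk _ x ∈ (ofNormalSubgroup N T' hk).range :=
  ⟨⟨_, hxN⟩, (mk_eq_mk_of_lift_eq_of_norm_add_le (by simp) (by simpa using hx)).symm⟩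

theorem range_ofNormalSubgroup_normal [N.Normal] (hk : 4 ≤ k) :
    (ofNormalSubgroup N T' hk).range.Normal := by
  have hconj : ∀ x : FreeGroup ↥((N : Set G) ∪ T'), x.norm ≤ 1 → ∀ m : N,
      PresentedGroup.mk _ x * ofNormalSubgroup N T' hk m * (PresentedGroup.mk _ x)⁻¹ ∈
        (ofNormalSubgroup N T' hk).range := by
    intro x hx m
    refine mk_mem_range_ofNormalSubgroup hk (x := x * .of ⟨m, Or.inl m.2⟩ * x⁻¹) ?_ ?_
    · simpa using ‹N.Normal›.conj_mem m m.2 (lift (↑) x)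
    · grw [FreeGroup.norm_mul_le, FreeGroup.norm_mul_le]
      simp
      omega
  rw [← normalizer_eq_top_iff, eq_top_iff]
  refine fun g _ => PresentedGroup.generated_by _ _
    (fun s => mem_normalizer_iff.mpr fun h => ⟨?_, ?_⟩) g
  · rintro ⟨m, rfl⟩
    exact hconj _ (by simp) m
  · rintro ⟨m, hm⟩
    simpa [PresentedGroup.of, hm, mul_assoc] using hconj (FreeGroup.of s)⁻¹ (by simp) m

end NormalSubgroup

section Quotient

variable {N : Subgroup G} [N.Normal] {T' : Set G} {T : Set (G ⧸ N)} [DecidableEq (G ⧸ N)]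
  {k n : ℕ}

theorem mk_map_mem_range_ofNormalSubgroup (hk : 4 ≤ k) (hnk : n + 1 ≤ k)
    (σ : T → ↥((N : Set G) ∪ T')) (hσ : ∀ t, ((σ t : G) : G ⧸ N) = t) {r : FreeGroup T}
    (hr : r ∈ shortRelations T n) :
    PresentedGroup.mk _ (FreeGroup.map σ r) ∈ (ofNormalSubgroup N T' hk).range := by
  have hlift : (QuotientGroup.mk' N).comp ((lift (↑)).comp (FreeGroup.map σ)) = lift (↑) :=
    FreeGroup.ext_hom _ _ fun t => by simpa using hσ t
  refine mk_mem_range_ofNormalSubgroup hk ?_ ?_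
  · rw [← QuotientGroup.eq_one_iff]
    simpa [hr.1] using DFunLike.congr_fun hlift r
  · grw [FreeGroup.norm_map_le]
    exact hnk.trans' (by simpa using hr.2)

theorem exists_comp_toGroupOfShortRelations_eq_mk' (hT : closure T = ⊤)
    (hR : (lift ((↑) : T → G ⧸ N)).ker ≤ normalClosure (shortRelations T n))
    (hT' : (↑) '' T' = T) (hk : 4 ≤ k) (hnk : n + 1 ≤ k)
    [(ofNormalSubgroup N T' hk).range.Normal] :
    ∃ χ : G ⧸ N →* PresentedGroup (shortRelations ((N : Set G) ∪ T') k) ⧸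
        (ofNormalSubgroup N T' hk).range,
      χ.comp ((QuotientGroup.mk' N).comp (toGroupOfShortRelations _ k)) =
        QuotientGroup.mk' _ := by
  set M := (ofNormalSubgroup N T' hk).range
  have hT'T : ∀ t : T, ∃ g ∈ T', (g : G ⧸ N) = t := fun t => hT' ▸ t.2
  choose σ hσT' hσ using hT'T
  let σS : T → ↥((N : Set G) ∪ T') := fun t => ⟨σ t, Or.inr (hσT' t)⟩
  let ψ : FreeGroup T →* PresentedGroup (shortRelations ((N : Set G) ∪ T') k) ⧸ M :=
    (QuotientGroup.mk' M).comp ((PresentedGroup.mk _).comp (FreeGroup.map σS))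
  have hψ : (lift ((↑) : T → G ⧸ N)).ker ≤ ψ.ker :=
    hR.trans <| normalClosure_le_normal fun r hr =>
      (QuotientGroup.eq_one_iff _).mpr (mk_map_mem_range_ofNormalSubgroup hk hnk σS hσ hr)
  have hsurj := lift_surjective_iff_closure_range_eq_top.mpr (by rwa [Subtype.range_coe])
  let χ := (lift ((↑) : T → G ⧸ N)).liftOfSurjective hsurj ⟨ψ, hψ⟩
  -- A letter from `N` dies on both sides; a letter `g ∈ T'` differs from `σS (g : G ⧸ N)` by an
  -- element of `N`.
  refine ⟨χ, PresentedGroup.ext fun ⟨g, hg⟩ => ?_⟩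
  rcases hg with hgN | hgT'
  · have : PresentedGroup.of ⟨g, Or.inl hgN⟩ ∈ M := ⟨⟨g, hgN⟩, rfl⟩
    simpa [(QuotientGroup.eq_one_iff g).mpr hgN, eq_comm] using
      (QuotientGroup.eq_one_iff _).mpr this
  · let t : T := ⟨g, hT' ▸ Set.mem_image_of_mem _ hgT'⟩
    have hχt : χ (g : G ⧸ N) = QuotientGroup.mk' M (PresentedGroup.mk _ (.of (σS t))) := by
      rw [show (g : G ⧸ N) = lift (↑) (FreeGroup.of t) by simp [t]]
      exact MonoidHom.liftOfRightInverse_comp_apply _ _ _ _ _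
    have hσg :
        PresentedGroup.mk _ ((FreeGroup.of (σS t))⁻¹ * .of ⟨g, Or.inr hgT'⟩) ∈ M := by
      refine mk_mem_range_ofNormalSubgroup hk ?_ ?_
      · simpa [σS, t] using QuotientGroup.eq.mp (hσ t)
      · grw [FreeGroup.norm_mul_le]
        simp
        omega
    simpa [hχt, QuotientGroup.eq, PresentedGroup.of] using hσg

theorem mem_range_ofNormalSubgroup_of_toGroupOfShortRelations_mem (hT : closure T = ⊤)
    (hR : (lift ((↑) : T → G ⧸ N)).ker ≤ normalClosure (shortRelations T n))
    (hT' : (↑) '' T' = T) (hk : 4 ≤ k) (hnk : n + 1 ≤ k)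
    {x : PresentedGroup (shortRelations ((N : Set G) ∪ T') k)}
    (hx : toGroupOfShortRelations _ k x ∈ N) : x ∈ (ofNormalSubgroup N T' hk).range := by
  have := range_ofNormalSubgroup_normal (N := N) (T' := T') hk
  obtain ⟨χ, hχ⟩ := exists_comp_toGroupOfShortRelations_eq_mk' hT hR hT' hk hnk
  rw [← QuotientGroup.eq_one_iff, ← QuotientGroup.mk'_apply, ← hχ]
  simp [(QuotientGroup.eq_one_iff _).mpr hx]

theorem ker_lift_le_normalClosure_shortRelations (hT : closure T = ⊤)
    (hR : (lift ((↑) : T → G ⧸ N)).ker ≤ normalClosure (shortRelations T n))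
    (hT' : (↑) '' T' = T) (hk : 4 ≤ k) (hnk : n + 1 ≤ k) :
    (lift ((↑) : ↥((N : Set G) ∪ T') → G)).ker ≤ normalClosure (shortRelations _ k) := by
  intro x hx
  rw [MonoidHom.mem_ker] at hx
  obtain ⟨m, hm⟩ := mem_range_ofNormalSubgroup_of_toGroupOfShortRelations_mem hT hR hT' hk hnk
    (x := PresentedGroup.mk _ x) (by simp [hx, N.one_mem])
  have hm1 : m = 1 := Subtype.ext <| by
    simpa [hx] using congrArg (toGroupOfShortRelations _ k) hm
  rw [← PresentedGroup.mk_eq_one_iff, ← hm, hm1, _root_.map_one]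

end Quotient

end

/-- if `G / N` is boundedly presented by `T` and `T' ⊆ G` projects onto `T`, then
`G` is boundedly presented by `N ∪ T'`. -/
theorem boundedlyPresentedBy_union_of_quotient {G : Type*} [Group G] (N : Subgroup G) [N.Normal]
    (T : Set (G ⧸ N)) (hT : BoundedlyPresentedBy (G ⧸ N) T)
    (T' : Set G) (hT' : (QuotientGroup.mk : G → G ⧸ N) '' T' = T) :
    BoundedlyPresentedBy G ((N : Set G) ∪ T') := by
  classical
  obtain ⟨hTtop, n, hR⟩ := boundedlyPresentedBy_iff_s3.mp hT
  refine boundedlyPresentedBy_iff_s3.mpr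
    ⟨closure_union_eq_top_of_closure_image_eq_top (hT' ▸ hTtop), n + 4, ?_⟩
  exact ker_lift_le_normalClosure_shortRelations hTtop hR hT' (by omega) (by omega)
end

section
/- Let G be a locally compact Hausdorff topological group that is compactly presented. Then for every compact generating subset S of G, the group G is boundedly presented by S. -/
open scoped Pointwise

/-- A topological group is *compactly presented* if it is boundedly presented by some compact
subset. -/
def CompactlyPresented (G : Type*) [Group G] [TopologicalSpace G] : Prop :=
  ∃ S : Set G, IsCompact S ∧ BoundedlyPresentedBy G S

/-!
The compact sets `(S ∪ S⁻¹ ∪ {1}) ^ n` exhaust `G`, so by Baire's theorem one of them has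
interior, and then some power of `S ∪ S⁻¹ ∪ {1}` is a neighbourhood of `1`. Hence every compact
set, in particular a compact set `T` over which `G` is boundedly presented, lies in a bounded power
of `S ∪ S⁻¹ ∪ {1}`, and conversely. Rewriting the letters of `T` as words of bounded length in `S`
and back, a Tietze transformation turns the bounded presentation over `T` into one over `S`: the
old relators are rewritten in `S`, and each `s ∈ S` gets the relator `s⁻¹ · w'`, where `w'` is `s`
rewritten through `T` and back; all of these have bounded length.
-/

open Set Topology

namespace FreeGroup

theorem ker_eq_normalClosure_of_comp_eq {α H G : Type*} [Group H] [Group G]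
    {p : FreeGroup α →* G} {q : H →* G} {φ : H →* FreeGroup α} {θ : FreeGroup α →* H}
    (hφ : p.comp φ = q) (hθ : q.comp θ = p) {R : Set H} (hR : q.ker = Subgroup.normalClosure R) :
    p.ker = Subgroup.normalClosure (φ '' R ∪ range fun a => (of a)⁻¹ * φ (θ (of a))) := by
  set N := Subgroup.normalClosure (φ '' R ∪ range fun a => (of a)⁻¹ * φ (θ (of a)))
  refine le_antisymm (fun x hx => ?_) (Subgroup.normalClosure_le_normal ?_)
  · -- Modulo `N`, `φ ∘ θ` fixes the generators, so `x ≡ φ (θ x)`, a consequence of `R`.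
    set π := QuotientGroup.mk' N
    have hπ : ∀ r ∈ φ '' R ∪ range fun a => (of a)⁻¹ * φ (θ (of a)), π r = 1 := fun r hr =>
      (QuotientGroup.eq_one_iff r).2 (Subgroup.subset_normalClosure hr)
    have hR_le : Subgroup.normalClosure R ≤ (π.comp φ).ker :=
      Subgroup.normalClosure_le_normal fun r hr => hπ _ (Or.inl ⟨r, hr, rfl⟩)
    have hπφθ : (π.comp φ).comp θ = π := ext_hom _ _ fun a => by
      have h := hπ _ (Or.inr ⟨a, rfl⟩)
      rw [_root_.map_mul, _root_.map_inv, inv_mul_eq_one] at h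
      exact h.symm
    have hθx : θ x ∈ q.ker := by rw [MonoidHom.mem_ker, ← MonoidHom.comp_apply, hθ]; exact hx
    rw [← QuotientGroup.ker_mk' N, MonoidHom.mem_ker]
    calc π x = π (φ (θ x)) := congr($hπφθ x).symm
      _ = 1 := hR_le (hR ▸ hθx)
  · rintro _ (⟨r, hr, rfl⟩ | ⟨a, rfl⟩)
    · have hr : r ∈ q.ker := hR ▸ Subgroup.subset_normalClosure hr
      rw [SetLike.mem_coe, MonoidHom.mem_ker, ← MonoidHom.comp_apply, hφ]
      exact hr
    · have h := congr($hφ (θ (of a)))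
      rw [MonoidHom.comp_apply, ← MonoidHom.comp_apply q, hθ] at h
      simp [h]

variable {α β : Type*} [DecidableEq α]

theorem exists_mk_eq_and_length_le_iff {x : FreeGroup α} {n : ℕ} :
    (∃ w : List (α × Bool), mk w = x ∧ w.length ≤ n) ↔ norm x ≤ n :=
  ⟨fun ⟨_, hw, hlen⟩ => hw ▸ norm_mk_le.trans hlen, fun h => ⟨x.toWord, mk_toWord, h⟩⟩

theorem norm_lift_le [DecidableEq β] {f : α → FreeGroup β} {k : ℕ} (hf : ∀ a, norm (f a) ≤ k)
    (x : FreeGroup α) : norm (lift f x) ≤ k * norm x := by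
  suffices h : ∀ w : List (α × Bool), norm (lift f (mk w)) ≤ k * w.length by
    have hx := h x.toWord
    rwa [mk_toWord] at hx
  intro w
  induction w with
  | nil => simp [← one_eq_mk]
  | cons p w ih =>
    have hp : norm (lift f (mk [p])) ≤ k := by
      obtain ⟨a, _ | _⟩ := p <;> simpa using hf a
    calc norm (lift f (mk (p :: w))) = norm (lift f (mk [p]) * lift f (mk w)) := by
          rw [← _root_.map_mul, mul_mk, List.singleton_append]
      _ ≤ k + k * w.length := (norm_mul_le _ _).trans (add_le_add hp ih)
      _ = k * (p :: w).length := by rw [List.length_cons]; ring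

end FreeGroup

theorem exists_word_of_mem_pow {G : Type*} [Group G] {S : Set G} {n : ℕ} {x : G}
    (hx : x ∈ (S ∪ S⁻¹ ∪ {1}) ^ n) :
    ∃ w : List (S × Bool), w.length ≤ n ∧ FreeGroup.lift (fun s : S => (s : G)) (.mk w) = x := by
  induction n generalizing x with
  | zero =>
    rw [pow_zero, mem_one] at hx
    exact ⟨[], le_rfl, by simp [← FreeGroup.one_eq_mk, hx]⟩
  | succ n ih =>
    obtain ⟨y, hy, v, hv, rfl⟩ := mem_mul.1 (pow_succ (S ∪ S⁻¹ ∪ {1}) n ▸ hx)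
    obtain ⟨w, hwlen, rfl⟩ := ih hy
    rcases hv with (hv | hv) | rfl
    · refine ⟨w ++ [(⟨v, hv⟩, true)], by simpa using hwlen, ?_⟩
      simp [← FreeGroup.mul_mk]
    · refine ⟨w ++ [(⟨v⁻¹, hv⟩, false)], by simpa using hwlen, ?_⟩
      simp [← FreeGroup.mul_mk]
    · exact ⟨w, hwlen.trans n.le_succ, (mul_one _).symm⟩

theorem BoundedlyPresentedBy.closure_eq_top {G : Type*} [Group G] {S : Set G}
    (h : BoundedlyPresentedBy G S) : Subgroup.closure S = ⊤ := by
  obtain ⟨-, -, -, hsurj, -⟩ := h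
  rwa [FreeGroup.lift_surjective_iff_closure_range_eq_top, Subtype.range_coe] at hsurj

theorem BoundedlyPresentedBy.of_subset_pow {G : Type*} [Group G] {S T : Set G} {k m : ℕ}
    (hT : BoundedlyPresentedBy G T) (hTS : T ⊆ (S ∪ S⁻¹ ∪ {1}) ^ k)
    (hST : S ⊆ (T ∪ T⁻¹ ∪ {1}) ^ m) : BoundedlyPresentedBy G S := by
  classical
  have hT_gen := hT.closure_eq_top
  obtain ⟨n, R, hR, -, hker⟩ := hT
  choose wT hwT_len hwT using fun t : T => exists_word_of_mem_pow (hTS t.2)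
  choose wS hwS_len hwS using fun s : S => exists_word_of_mem_pow (hST s.2)
  set φ := FreeGroup.lift fun t => FreeGroup.mk (wT t)
  set θ := FreeGroup.lift fun s => FreeGroup.mk (wS s)
  have hφ : (FreeGroup.lift fun s : S => (s : G)).comp φ = FreeGroup.lift fun t : T => (t : G) :=
    FreeGroup.ext_hom _ _ fun t => by simp [φ, hwT]
  have hθ : (FreeGroup.lift fun t : T => (t : G)).comp θ = FreeGroup.lift fun s : S => (s : G) :=
    FreeGroup.ext_hom _ _ fun s => by simp [θ, hwS]
  have hφ_norm (x : FreeGroup T) : (φ x).norm ≤ k * x.norm :=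
    FreeGroup.norm_lift_le (fun t => FreeGroup.norm_mk_le.trans (hwT_len t)) x
  refine ⟨max (k * n) (1 + k * m), _, ?_, ?_, FreeGroup.ker_eq_normalClosure_of_comp_eq hφ hθ hker⟩
  · rintro _ (⟨r, hr, rfl⟩ | ⟨s, rfl⟩) <;> rw [FreeGroup.exists_mk_eq_and_length_le_iff]
    · calc (φ r).norm ≤ k * r.norm := hφ_norm r
        _ ≤ k * n := by gcongr; exact FreeGroup.exists_mk_eq_and_length_le_iff.1 (hR r hr)
        _ ≤ _ := le_max_left _ _
    · calc ((FreeGroup.of s)⁻¹ * φ (θ (.of s))).norm ≤ 1 + k * (θ (.of s)).norm := by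
            grw [FreeGroup.norm_mul_le, FreeGroup.norm_inv_eq, FreeGroup.norm_of, hφ_norm]
        _ ≤ 1 + k * m := by gcongr; simpa [θ] using FreeGroup.norm_mk_le.trans (hwS_len s)
        _ ≤ _ := le_max_right _ _
  · rw [FreeGroup.lift_surjective_iff_closure_range_eq_top, Subtype.range_coe, eq_top_iff,
      ← hT_gen, Subgroup.closure_le, FreeGroup.closure_eq_range]
    exact fun t ht => ⟨_, hwT ⟨t, ht⟩⟩

theorem inv_union_inv_union_one {G : Type*} [Group G] (S : Set G) :
    (S ∪ S⁻¹ ∪ {1})⁻¹ = S ∪ S⁻¹ ∪ {1} := by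
  rw [union_inv, union_inv, inv_inv, inv_singleton, inv_one, union_comm S⁻¹]

theorem inv_mem_pow_of_inv_eq {G : Type*} [Group G] {V : Set G} (hV : V⁻¹ = V) {n : ℕ} {x : G}
    (hx : x ∈ V ^ n) : x⁻¹ ∈ V ^ n := by
  rwa [← hV, inv_pow, inv_mem_inv]

theorem iUnion_pow_eq_univ_of_closure_eq_top {G : Type*} [Group G] {S : Set G}
    (hS : Subgroup.closure S = ⊤) : ⋃ n : ℕ, (S ∪ S⁻¹ ∪ {1}) ^ n = univ := by
  refine eq_univ_of_forall fun x => mem_iUnion.2 ?_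
  induction hS ▸ Subgroup.mem_top x using Subgroup.closure_induction with
  | mem y hy => exact ⟨1, by simp [hy]⟩
  | one => exact ⟨0, by simp⟩
  | mul a b _ _ ha hb =>
    obtain ⟨m, hm⟩ := ha
    obtain ⟨n, hn⟩ := hb
    exact ⟨m + n, pow_add (S ∪ S⁻¹ ∪ {1}) m n ▸ mul_mem_mul hm hn⟩
  | inv a _ ha =>
    obtain ⟨n, hn⟩ := ha
    exact ⟨n, inv_mem_pow_of_inv_eq (inv_union_inv_union_one S) hn⟩

theorem IsCompact.pow {G : Type*} [Monoid G] [TopologicalSpace G] [ContinuousMul G] {V : Set G}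
    (hV : IsCompact V) (n : ℕ) : IsCompact (V ^ n) := by
  induction n with
  | zero => simp
  | succ n ih => rw [pow_succ]; exact ih.mul hV

theorem exists_pow_mem_nhds_one {G : Type*} [Group G] [TopologicalSpace G] [ContinuousMul G]
    [T2Space G] [BaireSpace G] {V : Set G} (hV : IsCompact V) (hV_inv : V⁻¹ = V)
    (hV_univ : ⋃ n : ℕ, V ^ n = univ) : ∃ n, V ^ n ∈ 𝓝 1 := by
  obtain ⟨n, x, hx⟩ :=
    nonempty_interior_of_iUnion_of_closed (fun n => (hV.pow n).isClosed) hV_univ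
  have hx_inv : x⁻¹ ∈ V ^ n := inv_mem_pow_of_inv_eq hV_inv (interior_subset hx)
  refine ⟨n + n, Filter.mem_of_superset ?_ (pow_add V n n ▸ smul_set_subset_mul hx_inv)⟩
  rw [← inv_mul_cancel x, ← smul_eq_mul, smul_mem_nhds_smul_iff]
  exact mem_interior_iff_mem_nhds.1 hx

theorem IsCompact.exists_subset_pow {G : Type*} [Group G] [TopologicalSpace G] [ContinuousMul G]
    {K V : Set G} {m : ℕ} (hK : IsCompact K) (hV_one : 1 ∈ V) (hV_univ : ⋃ n : ℕ, V ^ n = univ)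
    (hm : V ^ m ∈ 𝓝 1) : ∃ n, K ⊆ V ^ n := by
  have hpow_subset (n : ℕ) : V ^ n ⊆ interior (V ^ (n + m)) := fun x hx =>
    mem_interior_iff_mem_nhds.2 <|
      Filter.mem_of_superset (smul_mem_nhds_self.2 hm) (pow_add V n m ▸ smul_set_subset_mul hx)
  have hcover : K ⊆ ⋃ n : ℕ, interior (V ^ (n + m)) := by
    refine fun x _ => mem_iUnion.2 ?_
    obtain ⟨n, hn⟩ := mem_iUnion.1 (hV_univ ▸ mem_univ x)
    exact ⟨n, hpow_subset n hn⟩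
  obtain ⟨n, hn⟩ := hK.elim_directed_cover _ (fun _ => isOpen_interior) hcover <|
    Monotone.directed_le fun a b hab => interior_mono (pow_subset_pow_right hV_one (by omega))
  exact ⟨n + m, hn.trans interior_subset⟩

theorem IsCompact.exists_subset_pow_of_closure_eq_top {G : Type*} [Group G] [TopologicalSpace G]
    [IsTopologicalGroup G] [T2Space G] [BaireSpace G] {K S : Set G} (hK : IsCompact K)
    (hS : IsCompact S) (hS_gen : Subgroup.closure S = ⊤) : ∃ n, K ⊆ (S ∪ S⁻¹ ∪ {1}) ^ n := by
  have hV_univ := iUnion_pow_eq_univ_of_closure_eq_top hS_gen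
  obtain ⟨m, hm⟩ := exists_pow_mem_nhds_one ((hS.union hS.inv).union isCompact_singleton)
    (inv_union_inv_union_one S) hV_univ
  exact hK.exists_subset_pow (by simp) hV_univ hm

/-- a compactly presented locally compact group is boundedly presented by each of
its compact generating subsets. -/
theorem boundedlyPresentedBy_of_compactlyPresented {G : Type*} [Group G] [TopologicalSpace G]
    [IsTopologicalGroup G] [T2Space G] [LocallyCompactSpace G]
    (hG : CompactlyPresented G) (S : Set G) (hS : IsCompact S)
    (hgen : Subgroup.closure S = ⊤) :
    BoundedlyPresentedBy G S := by
  obtain ⟨T, hT_cpt, hT⟩ := hG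
  obtain ⟨k, hTS⟩ := hT_cpt.exists_subset_pow_of_closure_eq_top hS hgen
  obtain ⟨m, hST⟩ := hS.exists_subset_pow_of_closure_eq_top hT_cpt hT.closure_eq_top
  exact hT.of_subset_pow hTS hST
end

section
/- Let G be a Hausdorff topological group and H a closed subgroup of G that is cocompact in G, i.e. there exists a compact subset K ⊆ G such that G = HK = {hk : h ∈ H, k ∈ K}. Then G is compactly generated if and only if H is compactly generated. -/
/-!
If `G = H * K` with `K` compact, a compact generating set of `H` together with `K` generates
`G`. Conversely, if `S` generates `G` and `1 ∈ K`, `1 ∈ S`, then every `g ∈ G` can be written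
`l * k` with `k ∈ K` and `l` in the subgroup generated by the Schreier generators `K S K⁻¹ ∩ H`
(induction on a word in `S`); for `g ∈ H` this forces `k ∈ H ∩ K`, so these generators
generate `H`. They form a compact set when `K`, `S` are compact and `H` is closed.
-/

/-- A topological group is *compactly generated* if it is generated, as an abstract group, by
some compact subset. -/
def IsCompactlyGeneratedGroup (G : Type*) [Group G] [TopologicalSpace G] : Prop :=
  ∃ S : Set G, IsCompact S ∧ Subgroup.closure S = ⊤

open scoped Pointwise

namespace Subgroup

variable {G : Type*} [Group G]

def schreierGenerators (H : Subgroup G) (K S : Set G) : Set G :=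
  K * S * K⁻¹ ∩ H

variable {H : Subgroup G} {K S : Set G}

theorem mul_mem_closure_schreierGenerators_mul (hHK : (H : Set G) * K = Set.univ)
    {x s : G} (hx : x ∈ (closure (schreierGenerators H K S) : Set G) * K) (hs : s ∈ S) :
    x * s ∈ (closure (schreierGenerators H K S) : Set G) * K ∧
      x * s⁻¹ ∈ (closure (schreierGenerators H K S) : Set G) * K := by
  obtain ⟨l, hl, k, hk, rfl⟩ := hx
  constructor
  · obtain ⟨h, hh, k', hk', hks⟩ : k * s ∈ (H : Set G) * K := hHK ▸ Set.mem_univ _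
    have hgen : h ∈ schreierGenerators H K S :=
      ⟨⟨k * s, Set.mul_mem_mul hk hs, k'⁻¹, Set.inv_mem_inv.2 hk',
        by rw [← hks]; group⟩, hh⟩
    exact ⟨l * h, mul_mem hl (subset_closure hgen), k', hk', by
      dsimp only at hks ⊢; rw [mul_assoc, hks, mul_assoc]⟩
  · obtain ⟨h, hh, k', hk', hks⟩ : k * s⁻¹ ∈ (H : Set G) * K := hHK ▸ Set.mem_univ _
    -- `h = k s⁻¹ k'⁻¹` is not a Schreier generator, but its inverse `k' s k⁻¹` is.
    have hgen : h⁻¹ ∈ schreierGenerators H K S :=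
      ⟨⟨k' * s, Set.mul_mem_mul hk' hs, k⁻¹, Set.inv_mem_inv.2 hk,
        by rw [eq_mul_inv_iff_mul_eq.2 hks]; group⟩, inv_mem hh⟩
    exact ⟨l * h, mul_mem hl (inv_mem_iff.1 (subset_closure hgen)), k', hk', by
      dsimp only at hks ⊢; rw [mul_assoc, hks, mul_assoc]⟩

theorem closure_schreierGenerators_mul_eq_univ (hHK : (H : Set G) * K = Set.univ)
    (hK1 : 1 ∈ K) (hS : closure S = ⊤) :
    (closure (schreierGenerators H K S) : Set G) * K = Set.univ := by
  refine Set.eq_univ_of_forall fun g => ?_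
  induction (hS ▸ mem_top g : g ∈ closure S) using closure_induction_right with
  | one => exact ⟨1, one_mem _, 1, hK1, one_mul 1⟩
  | mul_right x _ s hs ih => exact (mul_mem_closure_schreierGenerators_mul hHK ih hs).1
  | mul_inv_cancel x _ s hs ih => exact (mul_mem_closure_schreierGenerators_mul hHK ih hs).2

theorem closure_schreierGenerators (hHK : (H : Set G) * K = Set.univ) (hK1 : 1 ∈ K)
    (hS1 : 1 ∈ S) (hS : closure S = ⊤) : closure (schreierGenerators H K S) = H := by
  refine le_antisymm ((closure_le H).2 Set.inter_subset_right) fun h hh => ?_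
  obtain ⟨l, hl, k, hk, rfl⟩ : h ∈ (closure (schreierGenerators H K S) : Set G) * K :=
    closure_schreierGenerators_mul_eq_univ hHK hK1 hS ▸ Set.mem_univ h
  have hkH : k ∈ H := by
    simpa using mul_mem (inv_mem ((closure_le H).2 Set.inter_subset_right hl)) hh
  have hgen : k ∈ schreierGenerators H K S :=
    ⟨⟨k * 1, Set.mul_mem_mul hk hS1, 1⁻¹, Set.inv_mem_inv.2 hK1, by group⟩, hkH⟩
  exact mul_mem hl (subset_closure hgen)

theorem isCompact_schreierGenerators [TopologicalSpace G] [IsTopologicalGroup G]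
    (hH : IsClosed (H : Set G)) (hK : IsCompact K) (hS : IsCompact S) :
    IsCompact (schreierGenerators H K S) :=
  ((hK.mul hS).mul hK.inv).inter_right hH

end Subgroup

section

variable {G : Type*} [Group G] [TopologicalSpace G]

theorem IsCompactlyGeneratedGroup.of_closure_eq {H : Subgroup G} (hH : IsClosed (H : Set G))
    {T : Set G} (hT : IsCompact T) (hTH : Subgroup.closure T = H) :
    IsCompactlyGeneratedGroup H := by
  subst hTH
  exact ⟨_, hH.isClosedEmbedding_subtypeVal.isCompact_preimage hT,
    Subgroup.closure_preimage_eq_top T⟩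

theorem IsCompactlyGeneratedGroup.of_subgroup_mul_eq_univ {H : Subgroup G}
    (hH : IsCompactlyGeneratedGroup H) {K : Set G} (hK : IsCompact K)
    (hHK : (H : Set G) * K = Set.univ) : IsCompactlyGeneratedGroup G := by
  obtain ⟨T, hT, hTtop⟩ := hH
  have hclosure : Subgroup.closure (Subtype.val '' T) = H := by
    rw [← H.coe_subtype, ← MonoidHom.map_closure, hTtop, ← MonoidHom.range_eq_map,
      Subgroup.range_subtype]
  refine ⟨Subtype.val '' T ∪ K, (hT.image continuous_subtype_val).union hK,
    eq_top_iff.2 fun g _ => ?_⟩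
  obtain ⟨h, hh, k, hk, rfl⟩ : g ∈ (H : Set G) * K := hHK ▸ Set.mem_univ g
  exact mul_mem (Subgroup.closure_mono Set.subset_union_left (hclosure.ge hh))
    (Subgroup.subset_closure (Set.subset_union_right hk))

end

theorem isCompactlyGeneratedGroup_iff_cocompact_subgroup_general {G : Type*} [Group G]
    [TopologicalSpace G] [IsTopologicalGroup G]
    (H : Subgroup G) (hclosed : IsClosed (H : Set G))
    (K : Set G) (hK : IsCompact K) (hHK : (H : Set G) * K = Set.univ) :
    IsCompactlyGeneratedGroup G ↔ IsCompactlyGeneratedGroup H := by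
  refine ⟨fun ⟨S, hS, hStop⟩ => ?_, fun hH => hH.of_subgroup_mul_eq_univ hK hHK⟩
  have hHK' : (H : Set G) * insert 1 K = Set.univ :=
    Set.eq_univ_of_univ_subset (hHK ▸ Set.mul_subset_mul_left (Set.subset_insert 1 K))
  have hStop' : Subgroup.closure (insert 1 S) = ⊤ :=
    eq_top_mono (Subgroup.closure_mono (Set.subset_insert 1 S)) hStop
  exact .of_closure_eq hclosed
    (Subgroup.isCompact_schreierGenerators hclosed (hK.insert 1) (hS.insert 1))
    (Subgroup.closure_schreierGenerators hHK' (Set.mem_insert 1 K) (Set.mem_insert 1 S) hStop')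

/-- a Hausdorff topological group is compactly generated if and only if a given
closed cocompact subgroup is compactly generated. -/
theorem isCompactlyGeneratedGroup_iff_cocompact_subgroup {G : Type*} [Group G]
    [TopologicalSpace G] [IsTopologicalGroup G] [T2Space G]
    (H : Subgroup G) (hclosed : IsClosed (H : Set G))
    (K : Set G) (hK : IsCompact K) (hHK : (H : Set G) * K = Set.univ) :
    IsCompactlyGeneratedGroup G ↔ IsCompactlyGeneratedGroup H :=
  isCompactlyGeneratedGroup_iff_cocompact_subgroup_general H hclosed K hK hHK
end

section
/- Let X and Y be metric spaces that are quasi-isometric. If Y is coarsely simply connected, then X is coarsely simply connected. -/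
/-!
A quasi-isometry `f : X → Y` has a coarse left inverse `g : Y → X` (`g ∘ f` is uniformly close
to the identity), and both maps send `r`-close points to `r'`-close points. An `r`-loop `p` in `X`
is pushed forward by `f` to a loop in `Y`, which is filled there; pulling the filling back by `g`
fills `g ∘ f ∘ p`. Finally `p` and `g ∘ f ∘ p` are pointwise close paths with the same endpoints,
and such paths are equivalent by exchanging their points one at a time.
-/

/-- An `r`-path for the distance function `d`: a nonempty finite sequence of points in which any
two consecutive points are at distance at most `r`. -/
def IsPathOf {X : Type*} (d : X → X → ℝ) (r : ℝ) (p : List X) : Prop :=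
  p ≠ [] ∧ p.Chain' (fun a b => d a b ≤ r)

/-- One elementary step of `r`-equivalence: insertion of one point strictly between two
consecutive points of the sequence, both sequences being `r`-paths. -/
def PathInsertStep {X : Type*} (d : X → X → ℝ) (r : ℝ) (p q : List X) : Prop :=
  IsPathOf d r p ∧ IsPathOf d r q ∧
    ∃ (l₁ l₂ : List X) (y : X), l₁ ≠ [] ∧ l₂ ≠ [] ∧ p = l₁ ++ l₂ ∧ q = l₁ ++ y :: l₂

/-- `r`-equivalence of `r`-paths: the equivalence relation generated by insertion of one
point. -/
def PathEquiv {X : Type*} (d : X → X → ℝ) (r : ℝ) : List X → List X → Prop :=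
  Relation.EqvGen (PathInsertStep d r)

/-- `p` is an `r`-loop based at `x`. -/
def IsLoopOf {X : Type*} (d : X → X → ℝ) (r : ℝ) (x : X) (p : List X) : Prop :=
  IsPathOf d r p ∧ p.head? = some x ∧ p.getLast? = some x

/-- Coarse connectedness with respect to the distance function `d`: for some `r`, any two points
are joined by an `r`-path. -/
def CoarselyConnectedWith {X : Type*} (d : X → X → ℝ) : Prop :=
  ∃ r : ℝ, ∀ x y : X, ∃ p : List X,
    IsPathOf d r p ∧ p.head? = some x ∧ p.getLast? = some y

/-- Coarse simple connectedness with respect to the distance function `d`: coarse connectedness,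
and for every `r` there exists `r' ≥ r` such that every `r`-loop is `r'`-equivalent to the
constant loop at its basepoint. -/
def CoarselySimplyConnectedWith {X : Type*} (d : X → X → ℝ) : Prop :=
  CoarselyConnectedWith d ∧
    ∀ r : ℝ, ∃ r' : ℝ, r ≤ r' ∧ ∀ (x : X) (p : List X), IsLoopOf d r x p →
      ∃ k : ℕ, PathEquiv d r' p (List.replicate (k + 1) x)

/-- A pseudometric space is coarsely simply connected if it is so with respect to its
distance. -/
def CoarselySimplyConnected (X : Type*) [PseudoMetricSpace X] : Prop :=
  CoarselySimplyConnectedWith (dist : X → X → ℝ)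

/-- `f` is a quasi-isometry from `(X, dX)` to `(Y, dY)`: it is a quasi-isometric embedding with
quasi-dense image. -/
def IsQuasiIsometryWith {X Y : Type*} (dX : X → X → ℝ) (dY : Y → Y → ℝ) (f : X → Y) : Prop :=
  ∃ A B : ℝ, 1 ≤ A ∧ 0 ≤ B ∧
    (∀ x x' : X, A⁻¹ * dX x x' - B ≤ dY (f x) (f x')) ∧
    (∀ x x' : X, dY (f x) (f x') ≤ A * dX x x' + B) ∧
    (∀ y : Y, ∃ x : X, dY (f x) y ≤ B)

open List Relation

section Paths

variable {X Y : Type*} {d : X → X → ℝ} {dY : Y → Y → ℝ} {r r' : ℝ} {p q : List X}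

theorem IsPathOf.mono (h : r ≤ r') (hp : IsPathOf d r p) : IsPathOf d r' p :=
  ⟨hp.1, hp.2.imp fun _ _ hab => hab.trans h⟩

theorem PathEquiv.mono (h : r ≤ r') (hpq : PathEquiv d r p q) : PathEquiv d r' p q :=
  EqvGen.mono (fun _ _ ⟨hp, hq, hstep⟩ => ⟨hp.mono h, hq.mono h, hstep⟩) _ _ hpq

theorem PathEquiv.of_insert {l₁ l₂ : List X} {y : X} (hl₁ : l₁ ≠ []) (hl₂ : l₂ ≠ [])
    (hp : IsPathOf d r (l₁ ++ l₂)) (hq : IsPathOf d r (l₁ ++ y :: l₂)) :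
    PathEquiv d r (l₁ ++ l₂) (l₁ ++ y :: l₂) :=
  EqvGen.rel _ _ ⟨hp, hq, l₁, l₂, y, hl₁, hl₂, rfl, rfl⟩

theorem IsPathOf.map {φ : X → Y} (hφ : ∀ a b, d a b ≤ r → dY (φ a) (φ b) ≤ r')
    (hp : IsPathOf d r p) : IsPathOf dY r' (p.map φ) :=
  ⟨by simpa using hp.1, isChain_map_of_isChain φ hφ hp.2⟩

theorem IsLoopOf.map {φ : X → Y} (hφ : ∀ a b, d a b ≤ r → dY (φ a) (φ b) ≤ r') {x : X}
    (hp : IsLoopOf d r x p) : IsLoopOf dY r' (φ x) (p.map φ) :=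
  ⟨hp.1.map hφ, by simp [hp.2.1], by simp [hp.2.2]⟩

theorem PathEquiv.map {φ : X → Y} (hφ : ∀ a b, d a b ≤ r → dY (φ a) (φ b) ≤ r')
    (hpq : PathEquiv d r p q) : PathEquiv dY r' (p.map φ) (q.map φ) := by
  induction hpq with
  | rel _ _ h =>
    obtain ⟨hp, hq, l₁, l₂, y, hl₁, hl₂, rfl, rfl⟩ := h
    simpa using PathEquiv.of_insert (y := φ y) (by simpa using hl₁) (by simpa using hl₂)
      (by simpa using hp.map hφ) (by simpa using hq.map hφ)
  | refl => exact EqvGen.refl _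
  | symm _ _ _ ih => exact EqvGen.symm _ _ ih
  | trans _ _ _ _ _ ih₁ ih₂ => exact EqvGen.trans _ _ _ ih₁ ih₂

theorem PathEquiv.head?_eq (hpq : PathEquiv d r p q) : p.head? = q.head? := by
  induction hpq with
  | rel _ _ h =>
    obtain ⟨-, -, l₁, l₂, y, hl₁, -, rfl, rfl⟩ := h
    obtain ⟨a, l₁, rfl⟩ := exists_cons_of_ne_nil hl₁
    rfl
  | refl => rfl
  | symm _ _ _ ih => exact ih.symm
  | trans _ _ _ _ _ ih₁ ih₂ => exact ih₁.trans ih₂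

theorem PathEquiv.cons (hpq : PathEquiv d r p q) {x : X} (hx : ∀ a ∈ p.head?, d x a ≤ r) :
    PathEquiv d r (x :: p) (x :: q) := by
  induction hpq with
  | rel _ _ h =>
    obtain ⟨hp, hq, l₁, l₂, y, hl₁, hl₂, rfl, rfl⟩ := h
    have hxq : ∀ a ∈ (l₁ ++ y :: l₂).head?, d x a ≤ r := by
      obtain ⟨a, l₁, rfl⟩ := exists_cons_of_ne_nil hl₁
      exact hx
    exact PathEquiv.of_insert (l₁ := x :: l₁) (cons_ne_nil _ _) hl₂
      ⟨cons_ne_nil _ _, isChain_cons.mpr ⟨hx, hp.2⟩⟩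
      ⟨cons_ne_nil _ _, isChain_cons.mpr ⟨hxq, hq.2⟩⟩
  | refl => exact EqvGen.refl _
  | symm _ _ h ih => exact EqvGen.symm _ _ (ih (PathEquiv.head?_eq h ▸ hx))
  | trans _ _ _ h _ ih₁ ih₂ => exact EqvGen.trans _ _ _ (ih₁ hx) (ih₂ (PathEquiv.head?_eq h ▸ hx))

theorem exists_isPathOf_iff_reflTransGen {x y : X} :
    (∃ p, IsPathOf d r p ∧ p.head? = some x ∧ p.getLast? = some y) ↔
      ReflTransGen (fun a b => d a b ≤ r) x y := by
  constructor
  · rintro ⟨p, ⟨hne, hp⟩, hx, hy⟩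
    rw [head?_eq_some_head hne, Option.some_inj] at hx
    rw [getLast?_eq_some_getLast hne, Option.some_inj] at hy
    exact hx ▸ hy ▸ relationReflTransGen_of_exists_isChain p hp hne
  · intro h
    obtain ⟨p, hne, hp, hx, hy⟩ := exists_isChain_ne_nil_of_relationReflTransGen h
    exact ⟨p, ⟨hne, hp⟩, by simp [head?_eq_some_head hne, hx],
      by simp [getLast?_eq_some_getLast hne, hy]⟩

end Paths

section Metric

variable {X Y : Type*} [PseudoMetricSpace X] [PseudoMetricSpace Y]

/-- Replace the points of `p` by those of `q` one at a time: insert `b` after `x`, then delete the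
`a` it replaces, whose successor is within `s + c` of `b` by the triangle inequality. -/
theorem PathEquiv.cons_of_forall₂ {s c : ℝ} {p q : List X}
    (hpq : Forall₂ (fun a b => dist a b ≤ c) p q) (hp : IsChain (fun a b => dist a b ≤ s) p) :
    ∀ {x : X}, (∀ a ∈ p.head?, dist x a ≤ s + c) →
      IsChain (fun a b => dist a b ≤ s + c) (x :: q) →
      (x :: p).getLast? = (x :: q).getLast? →
      PathEquiv dist (s + c) (x :: p) (x :: q) := by
  induction hpq with
  | nil => exact fun _ _ _ => EqvGen.refl _
  | @cons a b p q hab hpq ih =>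
    intro x hxa hxq hlast
    cases hpq with
    | nil =>
      obtain rfl : a = b := by simpa using hlast
      exact EqvGen.refl _
    | @cons a' b' p q _ _ =>
      obtain ⟨haa', hp⟩ := isChain_cons_cons.mp hp
      obtain ⟨hxb, hq⟩ := isChain_cons_cons.mp hxq
      have hs : 0 ≤ s := dist_nonneg.trans haa'
      have hc : 0 ≤ c := dist_nonneg.trans hab
      have hba' : dist b a' ≤ s + c := by
        linarith [dist_triangle b a a', dist_comm a b]
      have hp_sc : IsChain (fun a b => dist a b ≤ s + c) (a' :: p) :=
        hp.imp fun _ _ h => by linarith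
      have hinsert : PathEquiv dist (s + c) (x :: a :: a' :: p) (x :: b :: a :: a' :: p) :=
        PathEquiv.of_insert (l₁ := [x]) (cons_ne_nil _ _) (cons_ne_nil _ _)
          ⟨cons_ne_nil _ _, .cons_cons (hxa a rfl) (.cons_cons (by linarith) hp_sc)⟩
          ⟨cons_ne_nil _ _, .cons_cons hxb (.cons_cons (by linarith [dist_comm a b])
            (.cons_cons (by linarith) hp_sc))⟩
      have hdelete : PathEquiv dist (s + c) (x :: b :: a' :: p) (x :: b :: a :: a' :: p) :=
        PathEquiv.of_insert (l₁ := [x, b]) (cons_ne_nil _ _) (cons_ne_nil _ _)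
          ⟨cons_ne_nil _ _, .cons_cons hxb (.cons_cons hba' hp_sc)⟩
          ⟨cons_ne_nil _ _, .cons_cons hxb (.cons_cons (by linarith [dist_comm a b])
            (.cons_cons (by linarith) hp_sc))⟩
      have htail : PathEquiv dist (s + c) (b :: a' :: p) (b :: b' :: q) :=
        ih hp (fun _ h => Option.some_inj.mp h ▸ hba') hq (by simpa using hlast)
      have htail' := htail.cons fun _ h => Option.some_inj.mp h ▸ hxb
      exact EqvGen.trans _ _ _ (EqvGen.trans _ _ _ hinsert (EqvGen.symm _ _ hdelete)) htail'

theorem PathEquiv.of_forall₂ {s c : ℝ} {p q : List X}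
    (hpq : Forall₂ (fun a b => dist a b ≤ c) p q) (hp : IsPathOf dist s p)
    (hq : IsPathOf dist s q) (hhead : p.head? = q.head?) (hlast : p.getLast? = q.getLast?) :
    PathEquiv dist (s + c) p q := by
  cases hpq with
  | nil => exact EqvGen.refl _
  | @cons x y p q hxy hpq =>
    obtain rfl : x = y := by simpa using hhead
    have hc : 0 ≤ c := dist_nonneg.trans hxy
    obtain ⟨hx, hp⟩ := isChain_cons.mp hp.2
    exact PathEquiv.cons_of_forall₂ hpq hp (fun a ha => by linarith [hx a ha])
      (hq.2.imp fun _ _ h => by linarith) hlast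

end Metric

section Coarse

variable {X Y : Type*} [PseudoMetricSpace X] [PseudoMetricSpace Y]

def IsBornologous (φ : X → Y) : Prop :=
  ∀ r : ℝ, ∃ r' : ℝ, ∀ a b, dist a b ≤ r → dist (φ a) (φ b) ≤ r'

theorem dist_update_le_of_dist_le [DecidableEq Y] {g : Y → X} {t t' : ℝ}
    (hg : ∀ a b, dist a b ≤ t → dist (g a) (g b) ≤ t') (y : Y) (x : X) {a b : Y}
    (hab : dist a b ≤ t) :
    dist (Function.update g y x a) (Function.update g y x b) ≤ dist x (g y) + max t' 0 := by
  have ht' := le_max_left t' 0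
  have h0 := le_max_right t' 0
  rcases eq_or_ne a y with rfl | ha <;> rcases eq_or_ne b a with rfl | hb
  · simp only [dist_self]; positivity
  · rw [Function.update_self, Function.update_of_ne hb]
    linarith [dist_triangle x (g a) (g b), hg a b hab]
  · simp only [dist_self]; positivity
  · rcases eq_or_ne b y with rfl | hby
    · rw [Function.update_self, Function.update_of_ne ha, dist_comm]
      linarith [dist_triangle x (g b) (g a), hg a b hab, dist_comm (g a) (g b)]
    · rw [Function.update_of_ne ha, Function.update_of_ne hby]
      linarith [hg a b hab, dist_nonneg (x := x) (y := g y)]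

theorem CoarselyConnectedWith.of_coarseLeftInverse {f : X → Y} {g : Y → X} {C : ℝ}
    (hg : IsBornologous g) (hgf : ∀ x, dist (g (f x)) x ≤ C)
    (hY : CoarselyConnectedWith (dist : Y → Y → ℝ)) :
    CoarselyConnectedWith (dist : X → X → ℝ) := by
  obtain ⟨s, hs⟩ := hY
  obtain ⟨s', hs'⟩ := hg s
  refine ⟨max s' C, fun x x' => exists_isPathOf_iff_reflTransGen.mpr ?_⟩
  have hpath : ReflTransGen (fun a b => dist a b ≤ max s' C) (g (f x)) (g (f x')) :=
    (exists_isPathOf_iff_reflTransGen.mp (hs (f x) (f x'))).lift g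
      fun a b hab => (hs' a b hab).trans (le_max_left _ _)
  exact .head (by rw [dist_comm]; exact (hgf x).trans (le_max_right _ _))
    (hpath.tail ((hgf x').trans (le_max_right _ _)))

/-- To fill a loop based at `x`, the coarse left inverse `g` is first modified so that
`g (f x) = x`; then `g ∘ f` fixes the basepoint and stays `2 * C`-close to the identity. -/
theorem CoarselySimplyConnected.of_coarseLeftInverse {f : X → Y} {g : Y → X} {C : ℝ}
    (hf : IsBornologous f) (hg : IsBornologous g) (hC : 0 ≤ C)
    (hgf : ∀ x, dist (g (f x)) x ≤ C) (hY : CoarselySimplyConnected Y) :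
    CoarselySimplyConnected X := by
  classical
  refine ⟨hY.1.of_coarseLeftInverse hg hgf, fun r => ?_⟩
  obtain ⟨rY, hrY⟩ := hf r
  obtain ⟨t, hrYt, hfill⟩ := hY.2 rY
  obtain ⟨t', ht'⟩ := hg t
  set T := C + max t' 0
  refine ⟨max r T + 2 * C, by linarith [le_max_left r T], fun x p hp => ?_⟩
  set g' := Function.update g (f x) x
  have hg' : ∀ a b, dist a b ≤ t → dist (g' a) (g' b) ≤ T := fun a b hab =>
    (dist_update_le_of_dist_le ht' (f x) x hab).trans (by linarith [dist_comm x (g (f x)), hgf x])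
  have hg'f : ∀ z, dist z (g' (f z)) ≤ 2 * C := by
    intro z
    rcases eq_or_ne (f z) (f x) with hz | hz
    · simp only [g', hz, Function.update_self]
      calc dist z x ≤ dist (g (f z)) z + dist (g (f x)) x := by
            rw [dist_comm _ z, hz]; exact dist_triangle z (g (f x)) x
        _ ≤ 2 * C := by linarith [hgf z, hgf x]
    · simp only [g', Function.update_of_ne hz]
      linarith [hgf z, dist_comm z (g (f z))]
  have hgf_close : ∀ a b, dist a b ≤ r → dist (g' (f a)) (g' (f b)) ≤ T :=
    fun a b hab => hg' _ _ ((hrY a b hab).trans hrYt)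
  obtain ⟨k, hk⟩ := hfill (f x) (p.map f) (hp.map hrY)
  have hfilled : PathEquiv dist T (p.map (g' ∘ f)) (replicate (k + 1) x) := by
    simpa [map_replicate, g'] using hk.map hg'
  have hclose : PathEquiv dist (max r T + 2 * C) p (p.map (g' ∘ f)) := by
    refine PathEquiv.of_forall₂ ?_ (hp.1.mono (le_max_left r T))
      ((hp.1.map hgf_close).mono (le_max_right r T)) ?_ ?_
    · exact forall₂_map_right_iff.mpr (forall₂_same.mpr fun z _ => hg'f z)
    · simp [hp.2.1, g']
    · simp [hp.2.2, g']
  exact ⟨k, hclose.trans _ _ _ (hfilled.mono (by linarith [le_max_right r T]))⟩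

end Coarse

namespace IsQuasiIsometryWith

variable {X Y : Type*} [PseudoMetricSpace X] [PseudoMetricSpace Y] {f : X → Y}

theorem isBornologous (hf : IsQuasiIsometryWith dist dist f) : IsBornologous f := by
  obtain ⟨A, B, hA, -, -, hup, -⟩ := hf
  exact fun r => ⟨A * r + B, fun a b hab => (hup a b).trans (by gcongr)⟩

theorem exists_coarseLeftInverse (hf : IsQuasiIsometryWith dist dist f) :
    ∃ (g : Y → X) (C : ℝ), IsBornologous g ∧ 0 ≤ C ∧ ∀ x, dist (g (f x)) x ≤ C := by
  obtain ⟨A, B, hA, hB, hlow, -, hdense⟩ := hf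
  choose g hg using hdense
  have hA₀ : 0 < A := zero_lt_one.trans_le hA
  have hlow' : ∀ a b, dist a b ≤ A * (dist (f a) (f b) + B) := fun a b =>
    (inv_mul_le_iff₀ hA₀).mp (by linarith [hlow a b])
  refine ⟨g, 2 * (A * B), fun r => ⟨A * (r + 3 * B), fun a b hab => ?_⟩, by positivity,
    fun x => ?_⟩
  · have : dist (f (g a)) (f (g b)) ≤ r + 2 * B := by
      linarith [dist_triangle4 (f (g a)) a b (f (g b)), hg a, hg b, dist_comm b (f (g b))]
    calc dist (g a) (g b) ≤ A * (dist (f (g a)) (f (g b)) + B) := hlow' _ _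
      _ ≤ A * (r + 3 * B) := mul_le_mul_of_nonneg_left (by linarith) hA₀.le
  · calc dist (g (f x)) x ≤ A * (dist (f (g (f x))) (f x) + B) := hlow' _ _
      _ ≤ 2 * (A * B) := by nlinarith [hg (f x)]

end IsQuasiIsometryWith

/-- coarse simple connectedness of metric spaces is a quasi-isometry invariant. -/
theorem coarselySimplyConnected_of_quasiIsometry {X Y : Type*} [MetricSpace X] [MetricSpace Y]
    (f : X → Y) (hf : IsQuasiIsometryWith (dist : X → X → ℝ) (dist : Y → Y → ℝ) f)
    (hY : CoarselySimplyConnected Y) :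
    CoarselySimplyConnected X := by
  obtain ⟨g, C, hg, hC, hgf⟩ := hf.exists_coarseLeftInverse
  exact hY.of_coarseLeftInverse hf.isBornologous hg hC hgf
end
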